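/- arXiv:1401.0459 — 7 statements merged into one kernel-verified Lean document; each statement's English description precedes it below -/
import Mathlib

section
/- Let R be a Bézout ring. Then the polynomial ring R[X] is Gaussian over R, i.e., for all f, g ∈ R[X], c(fg) = c(f)·c(g). -/
open Polynomial

/-- A proper ideal `I` is `n`-absorbing if whenever a product of `n+1` elements lies in `I`,
the product of some `n` of them lies in `I`. -/
def IsNAbsorbing {R : Type*} [CommRing R] (I : Ideal R) (n : ℕ) : Prop :=
  I ≠ ⊤ ∧ ∀ x : Fin (n + 1) → R, (∏ i, x i) ∈ I →
    ∃ j, (∏ i ∈ Finset.univ.erase j, x i) ∈ I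

/-- A proper ideal `I` is strongly `n`-absorbing if whenever a product of `n+1` ideals is
contained in `I`, the product of some `n` of them is contained in `I`. -/
def IsStronglyNAbsorbing {R : Type*} [CommRing R] (I : Ideal R) (n : ℕ) : Prop :=
  I ≠ ⊤ ∧ ∀ J : Fin (n + 1) → Ideal R, (∏ i, J i) ≤ I →
    ∃ j, (∏ i ∈ Finset.univ.erase j, J i) ≤ I

/-- The content of a polynomial: the ideal generated by its coefficients. -/
def polyContent {R : Type*} [CommRing R] (f : R[X]) : Ideal R :=
  Ideal.span (Set.range f.coeff)

/-!
Over a Bézout ring the content ideal of `f` is principal, say `(a)`, so `f = a • f₀` and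
`a = a s` for some `s ∈ c(f₀)`. Since `a (1 - s) = 0`, adding `(1 - s) X^N` to `f₀` beyond its
degree does not change `a • f₀`, but makes the content ideal contain `s` and `1 - s`, hence `1`.
Thus `f = a • f₁` and `g = b • g₁` with `f₁`, `g₁` of unit content; `f₁ g₁` then has unit
content too (no prime contains it), and `c(fg) = (ab) = c(f) c(g)`.
-/

namespace Polynomial

open Ideal

variable {R : Type*} [CommRing R]

theorem contentIdeal_le_iff {p : R[X]} {I : Ideal R} :
    p.contentIdeal ≤ I ↔ ∀ n, p.coeff n ∈ I := by
  refine ⟨fun h n ↦ h (coeff_mem_contentIdeal p n), fun h ↦ span_le.2 fun c hc ↦ ?_⟩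
  obtain ⟨n, -, rfl⟩ := mem_coeffs_iff.1 hc
  exact h n

theorem contentIdeal_C_mul (r : R) (p : R[X]) :
    (C r * p).contentIdeal = span {r} * p.contentIdeal := by
  refine le_antisymm ?_ ?_
  · simpa only [contentIdeal_C] using contentIdeal_mul_le_mul_contentIdeal (C r) p
  rw [contentIdeal_def p, span_mul_span', span_le]
  rintro _ ⟨r, rfl, c, hc, rfl⟩
  obtain ⟨n, -, rfl⟩ := mem_coeffs_iff.1 hc
  simpa only [SetLike.mem_coe, coeff_C_mul] using coeff_mem_contentIdeal (C r * p) n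

theorem contentIdeal_add_C_mul_X_pow {p : R[X]} {n : ℕ} (hn : p.natDegree < n) (u : R) :
    (p + C u * X ^ n).contentIdeal = p.contentIdeal ⊔ span {u} := by
  have hcoeff : ∀ k, (p + C u * X ^ n).coeff k = p.coeff k + if k = n then u else 0 := by
    intro k
    rw [coeff_add, coeff_C_mul_X_pow]
  refine le_antisymm (contentIdeal_le_iff.2 fun k ↦ ?_)
    (sup_le (contentIdeal_le_iff.2 fun k ↦ ?_) ?_)
  · rw [hcoeff]
    refine add_mem (mem_sup_left (coeff_mem_contentIdeal p k)) ?_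
    split_ifs
    · exact mem_sup_right (mem_span_singleton_self u)
    · exact zero_mem _
  · by_cases hk : k = n
    · rw [hk, coeff_eq_zero_of_natDegree_lt hn]
      exact zero_mem _
    · have hk' := coeff_mem_contentIdeal (p + C u * X ^ n) k
      rwa [hcoeff, if_neg hk, add_zero] at hk'
  · rw [span_singleton_le_iff_mem]
    have hn' := coeff_mem_contentIdeal (p + C u * X ^ n) n
    rwa [hcoeff, if_pos rfl, coeff_eq_zero_of_natDegree_lt hn, zero_add] at hn'

theorem exists_eq_C_mul_contentIdeal_eq_top [IsBezout R] (p : R[X]) :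
    ∃ a q, p = C a * q ∧ q.contentIdeal = ⊤ := by
  have hprin := IsBezout.isPrincipal_of_FG _ (contentIdeal_FG p)
  obtain ⟨p₀, hp₀⟩ := hprin.contentIdeal_generator_dvd
  have ha := hprin.generator_mem
  generalize hprin.generator = a at hp₀ ha
  rw [hp₀, contentIdeal_C_mul, mem_span_singleton_mul] at ha
  obtain ⟨s, hs, has⟩ := ha
  refine ⟨a, p₀ + C (1 - s) * X ^ (p₀.natDegree + 1), ?_, ?_⟩
  · rw [hp₀, mul_add, ← mul_assoc, ← C_mul, mul_sub, mul_one, has, sub_self, C_0, zero_mul,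
      add_zero]
  · rw [contentIdeal_add_C_mul_X_pow (Nat.lt_succ_self _), eq_top_iff_one]
    simpa using add_mem (mem_sup_left hs) (mem_sup_right (mem_span_singleton_self (1 - s)))

end Polynomial

theorem polyContent_eq_contentIdeal {R : Type*} [CommRing R] (f : R[X]) :
    polyContent f = f.contentIdeal :=
  le_antisymm (Ideal.span_le.2 (Set.range_subset_iff.2 (coeff_mem_contentIdeal f)))
    (contentIdeal_le_iff.2 fun n ↦ Ideal.subset_span ⟨n, rfl⟩)

/-- Over a Bézout ring, the polynomial ring is Gaussian: `c(fg) = c(f)c(g)`. -/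
theorem polyContent_mul_of_isBezout {R : Type*} [CommRing R] [IsBezout R] (f g : R[X]) :
    polyContent (f * g) = polyContent f * polyContent g := by
  obtain ⟨a, f₁, rfl, hf₁⟩ := exists_eq_C_mul_contentIdeal_eq_top f
  obtain ⟨b, g₁, rfl, hg₁⟩ := exists_eq_C_mul_contentIdeal_eq_top g
  have hfg₁ : (f₁ * g₁).contentIdeal = ⊤ := contentIdeal_mul_eq_top_of_contentIdeal_eq_top hf₁ hg₁
  simp only [polyContent_eq_contentIdeal]
  rw [mul_mul_mul_comm, ← C_mul]
  simp only [contentIdeal_C_mul, hf₁, hg₁, hfg₁, Ideal.mul_top,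
    Ideal.span_singleton_mul_span_singleton]
end

section
/- Let R be a reduced commutative ring. Then R[X] is an Armendariz R-algebra: for all f, g ∈ R[X], if fg = 0 then c(f)·c(g) = (0), equivalently a·b = 0 for every coefficient a of f and every coefficient b of g. -/
open Polynomial

/-! Modulo a prime `P`, the product `f g = 0` becomes a product in the domain `(R ⧸ P)[X]`, so
`f` or `g` vanishes there and every product of a coefficient of `f` with one of `g` lies in `P`.
Such a product therefore lies in the nilradical, which is zero when `R` is reduced. -/

theorem Polynomial.coeff_mul_coeff_mem_of_mul_eq_zero {R : Type*} [CommRing R] (P : Ideal R)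
    [P.IsPrime] {f g : R[X]} (h : f * g = 0) (i j : ℕ) : f.coeff i * g.coeff j ∈ P := by
  have hmap : f.map (Ideal.Quotient.mk P) * g.map (Ideal.Quotient.mk P) = 0 := by
    rw [← Polynomial.map_mul, h, Polynomial.map_zero]
  rcases mul_eq_zero.mp hmap with hf | hg
  · refine P.mul_mem_right _ (Ideal.Quotient.eq_zero_iff_mem.mp ?_)
    rw [← coeff_map, hf, coeff_zero]
  · refine P.mul_mem_left _ (Ideal.Quotient.eq_zero_iff_mem.mp ?_)
    rw [← coeff_map, hg, coeff_zero]

theorem Polynomial.isNilpotent_coeff_mul_coeff_of_mul_eq_zero {R : Type*} [CommRing R]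
    {f g : R[X]} (h : f * g = 0) (i j : ℕ) : IsNilpotent (f.coeff i * g.coeff j) := by
  rw [← mem_nilradical, nilradical_eq_sInf, Ideal.mem_sInf]
  intro P hP
  have : P.IsPrime := hP
  exact coeff_mul_coeff_mem_of_mul_eq_zero P h i j

theorem polyContent_mul_polyContent_eq_bot_iff {R : Type*} [CommRing R] (f g : R[X]) :
    polyContent f * polyContent g = ⊥ ↔ ∀ i j : ℕ, f.coeff i * g.coeff j = 0 := by
  rw [polyContent, polyContent, Ideal.span_mul_span, Ideal.span_eq_bot]
  constructor
  · intro h i j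
    exact h _ (Set.mul_mem_mul ⟨i, rfl⟩ ⟨j, rfl⟩)
  · rintro h _ ⟨_, ⟨i, rfl⟩, _, ⟨j, rfl⟩, rfl⟩
    exact h i j

/-- A reduced ring is Armendariz: `fg = 0` implies `c(f)c(g) = 0`, equivalently all products
of a coefficient of `f` with a coefficient of `g` vanish. -/
theorem armendariz_of_isReduced {R : Type*} [CommRing R] [IsReduced R] (f g : R[X])
    (h : f * g = 0) :
    polyContent f * polyContent g = ⊥ ∧ ∀ i j : ℕ, f.coeff i * g.coeff j = 0 := by
  have hcoeff : ∀ i j : ℕ, f.coeff i * g.coeff j = 0 := fun i j =>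
    (isNilpotent_coeff_mul_coeff_of_mul_eq_zero h i j).eq_zero
  exact ⟨(polyContent_mul_polyContent_eq_bot_iff f g).mpr hcoeff, hcoeff⟩
end

section
/- Let R be a commutative ring such that the zero ideal is p-primary for a prime ideal p with p² = (0). Then R[X] is an Armendariz R-algebra: fg = 0 implies c(f)·c(g) = (0) for all f, g ∈ R[X]. -/
open Polynomial

/-!
If `0` is primary, every zero divisor of `R` is nilpotent. By McCoy's theorem a zero divisor `f`
of `R[X]` is killed by a nonzero constant, so all coefficients of `f` are zero divisors of `R`
and `c(f) ⊆ √0 = p`. Hence if `fg = 0` with `f, g ≠ 0`, then `c(f) c(g) ⊆ p² = 0`.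
-/

section

open scoped nonZeroDivisors

variable {R : Type*} [CommRing R]

@[simp]
lemma polyContent_zero : polyContent (0 : R[X]) = ⊥ := by
  simp [polyContent]

lemma Ideal.mem_radical_bot_of_mul_eq_zero (hprimary : (⊥ : Ideal R).IsPrimary) {a b : R}
    (hab : a * b = 0) (hb : b ≠ 0) : a ∈ (⊥ : Ideal R).radical := by
  rw [← Ideal.mem_bot, mul_comm] at hab
  exact ((Ideal.isPrimary_iff.mp hprimary).2 hab).resolve_left hb

lemma polyContent_le_radical_bot_of_mul_eq_zero (hprimary : (⊥ : Ideal R).IsPrimary)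
    {f g : R[X]} (hfg : f * g = 0) (hg : g ≠ 0) : polyContent f ≤ (⊥ : Ideal R).radical := by
  have hf : f ∉ R[X]⁰ := fun hf => hg (mem_nonZeroDivisors_iff_left.mp hf g hfg)
  obtain ⟨a, ha, haf⟩ := Polynomial.notMem_nonZeroDivisors_iff.mp hf
  rw [polyContent, Ideal.span_le]
  rintro _ ⟨n, rfl⟩
  refine Ideal.mem_radical_bot_of_mul_eq_zero hprimary ?_ ha
  rw [mul_comm, ← smul_eq_mul, ← coeff_smul, haf, coeff_zero]

end

theorem armendariz_of_zero_primary_general {R : Type*} [CommRing R] (p : Ideal R)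
    (hprimary : (⊥ : Ideal R).IsPrimary)
    (hrad : (⊥ : Ideal R).radical = p) (hp2 : p ^ 2 = ⊥) (f g : R[X])
    (h : f * g = 0) : polyContent f * polyContent g = ⊥ := by
  rcases eq_or_ne f 0 with rfl | hf
  · simp
  rcases eq_or_ne g 0 with rfl | hg
  · simp
  have hcf := polyContent_le_radical_bot_of_mul_eq_zero hprimary h hg
  have hcg := polyContent_le_radical_bot_of_mul_eq_zero hprimary (mul_comm f g ▸ h) hf
  rw [hrad] at hcf hcg
  refine le_bot_iff.mp ?_
  calc polyContent f * polyContent g ≤ p * p := Ideal.mul_mono hcf hcg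
    _ = ⊥ := by rw [← pow_two, hp2]

/-- If the zero ideal of `R` is `p`-primary with `p² = 0`, then `R[X]` is Armendariz over
`R`. -/
theorem armendariz_of_zero_primary {R : Type*} [CommRing R] (p : Ideal R)
    (hp : p.IsPrime) (hprimary : (⊥ : Ideal R).IsPrimary)
    (hrad : (⊥ : Ideal R).radical = p) (hp2 : p ^ 2 = ⊥) (f g : R[X])
    (h : f * g = 0) : polyContent f * polyContent g = ⊥ :=
  armendariz_of_zero_primary_general p hprimary hrad hp2 f g h
end

section
/- A commutative ring R is Gaussian (c(fg) = c(f)c(g) for all f, g ∈ R[X]) if and only if for every ideal I of R, the ring R/I is Armendariz (i.e., for all f, g ∈ (R/I)[X], fg = 0 implies c(f)c(g) = (0)). -/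
open Polynomial

/-! Modulo an ideal `I`, a product `FG` vanishes exactly when `c(FG) ⊆ I`, and the products of
coefficients of `F` and `G` all vanish exactly when `c(F)c(G) ⊆ I`. So every quotient of `R` is
Armendariz iff `c(FG) ⊆ I` implies `c(F)c(G) ⊆ I` for all `I`, i.e. iff `c(F)c(G) ⊆ c(FG)`.
The reverse inclusion `c(FG) ⊆ c(F)c(G)` always holds, since each coefficient of `FG` is a sum
of products of coefficients of `F` and `G`. -/

def IsArmendariz (S : Type*) [CommRing S] : Prop :=
  ∀ f g : S[X], f * g = 0 → ∀ i j : ℕ, f.coeff i * g.coeff j = 0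

section

variable {R : Type*} [CommRing R]

lemma coeff_mem_polyContent (f : R[X]) (n : ℕ) : f.coeff n ∈ polyContent f :=
  Ideal.subset_span ⟨n, rfl⟩

lemma polyContent_le_iff {f : R[X]} {I : Ideal R} :
    polyContent f ≤ I ↔ ∀ n, f.coeff n ∈ I := by
  simp only [polyContent, Ideal.span_le, Set.range_subset_iff, SetLike.mem_coe]

lemma polyContent_le_iff_map_eq_zero {f : R[X]} {I : Ideal R} :
    polyContent f ≤ I ↔ f.map (Ideal.Quotient.mk I) = 0 := by
  simp only [polyContent_le_iff, Polynomial.ext_iff, coeff_map, coeff_zero,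
    Ideal.Quotient.eq_zero_iff_mem]

lemma polyContent_mul_polyContent_le_iff {f g : R[X]} {I : Ideal R} :
    polyContent f * polyContent g ≤ I ↔ ∀ i j, f.coeff i * g.coeff j ∈ I := by
  simp only [polyContent, Ideal.span_mul_span', Ideal.span_le, Set.mul_subset_iff,
    Set.forall_mem_range, SetLike.mem_coe]

lemma polyContent_mul_le (f g : R[X]) :
    polyContent (f * g) ≤ polyContent f * polyContent g :=
  polyContent_le_iff.2 fun n => by
    rw [coeff_mul]
    exact Ideal.sum_mem _ fun p _ =>
      Ideal.mul_mem_mul (coeff_mem_polyContent f p.1) (coeff_mem_polyContent g p.2)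

lemma isArmendariz_quotient_iff {I : Ideal R} :
    IsArmendariz (R ⧸ I) ↔
      ∀ F G : R[X], polyContent (F * G) ≤ I → polyContent F * polyContent G ≤ I := by
  have hsurj := Polynomial.map_surjective _ (Ideal.Quotient.mk_surjective (I := I))
  simp only [IsArmendariz, hsurj.forall, ← Polynomial.map_mul, ← polyContent_le_iff_map_eq_zero,
    coeff_map, ← map_mul, Ideal.Quotient.eq_zero_iff_mem, polyContent_mul_polyContent_le_iff]

end

/-- `R` is Gaussian iff `R/I` is Armendariz for every ideal `I` of `R`. -/
theorem gaussian_iff_quotients_armendariz {R : Type*} [CommRing R] :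
    (∀ f g : R[X], polyContent (f * g) = polyContent f * polyContent g) ↔
      ∀ I : Ideal R, ∀ f g : (R ⧸ I)[X], f * g = 0 →
        ∀ i j : ℕ, f.coeff i * g.coeff j = 0 :=
  calc (∀ f g : R[X], polyContent (f * g) = polyContent f * polyContent g)
      ↔ ∀ f g : R[X], polyContent f * polyContent g ≤ polyContent (f * g) :=
        forall₂_congr fun f g => ⟨fun h => h.ge, (polyContent_mul_le f g).antisymm⟩
    _ ↔ ∀ I : Ideal R, ∀ f g : R[X],
          polyContent (f * g) ≤ I → polyContent f * polyContent g ≤ I :=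
        ⟨fun h _ f g hI => (h f g).trans hI, fun h f g => h _ f g le_rfl⟩
    _ ↔ ∀ I : Ideal R, IsArmendariz (R ⧸ I) :=
        forall_congr' fun _ => isArmendariz_quotient_iff.symm
end

section
/- Let R be a Prüfer domain. Then every n-absorbing ideal of R is strongly n-absorbing. -/
open Polynomial

/-- A Prüfer domain: every nonzero finitely generated ideal is invertible as a fractional
ideal. -/
def IsPruferDomain (R : Type*) [CommRing R] [IsDomain R] : Prop :=
  ∀ I : Ideal R, I.FG → I ≠ ⊥ →
    ∃ J : FractionalIdeal (nonZeroDivisors R) (FractionRing R),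
      (I : FractionalIdeal (nonZeroDivisors R) (FractionRing R)) * J = 1

open scoped Pointwise

/-!
A Prüfer domain is locally a valuation domain, so any two principal ideals are locally
comparable (`LocallyUniserial R R`). Such a ring is a u-ring. By Neumann's lemma a cover of a
module by finitely many proper submodules descends to a finite quotient; there idempotent
powers of the scalars `e` split the module until it is uniserial, hence cyclic, and a generator
avoids every proper submodule.

In a u-ring an `n`-absorbing ideal `I` is strongly `n`-absorbing. Replace the ideals `J i` by
principal ones, one index `p` at a time. If for each `z ∈ J p` the family with `J p` replaced
by `(z)` can drop a factor `j ≠ p`, then `z` lies in the colon ideal `I : ∏_{i ≠ j, p} J i`; so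
`J p` is covered by finitely many colon ideals, and the u-ring property puts it inside one.
-/

theorem exists_isIdempotentElem_pow {M : Type*} [Monoid M] [Finite M] (a : M) :
    ∃ k ≠ 0, IsIdempotentElem (a ^ k) := by
  obtain ⟨i, j, hij, h⟩ := Finite.exists_ne_map_eq_of_infinite (a ^ · : ℕ → M)
  wlog hlt : i < j generalizing i j
  · exact this j i hij.symm h.symm (hij.symm.lt_of_le (not_lt.mp hlt))
  obtain ⟨p, rfl⟩ := Nat.exists_eq_add_of_lt hlt
  have periodic (m : ℕ) : a ^ (i + m * (p + 1)) = a ^ i := by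
    induction m with
    | zero => simp
    | succ m ih =>
      rw [add_mul, one_mul, ← add_assoc, pow_add, ih, ← pow_add, ← add_assoc, ← h]
  have eventually_periodic (n : ℕ) (hn : i ≤ n) (m : ℕ) : a ^ (n + m * (p + 1)) = a ^ n := by
    obtain ⟨c, rfl⟩ := Nat.exists_eq_add_of_le hn
    rw [add_right_comm, pow_add, periodic, ← pow_add]
  refine ⟨(i + 1) * (p + 1), by positivity, ?_⟩
  rw [IsIdempotentElem, ← pow_add, eventually_periodic _ (by nlinarith)]

/-- Locally on `Spec R`, one of `R ∙ x` and `R ∙ y` contains the other: `e` and `1 - e` generate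
the unit ideal, `y ∈ R ∙ x` once `e` is inverted and `x ∈ R ∙ y` once `1 - e` is inverted. -/
def LocallyUniserial (R M : Type*) [CommRing R] [AddCommGroup M] [Module R M] : Prop :=
  ∀ x y : M, ∃ e t s : R, e • y = t • x ∧ (1 - e) • x = s • y

section Module

variable {R M N : Type*} [CommRing R] [AddCommGroup M] [Module R M] [AddCommGroup N]
  [Module R N]

theorem Submodule.FG.isPrincipal_of_forall_mem_span_singleton {P : Submodule R M} (hP : P.FG)
    (h : ∀ x ∈ P, ∀ y ∈ P, x ∈ R ∙ y ∨ y ∈ R ∙ x) : P.IsPrincipal := by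
  obtain ⟨S, rfl⟩ := hP
  obtain ⟨x, hxS, hmax⟩ := Set.Finite.exists_maximalFor (fun x => R ∙ x) (insert 0 (S : Set M))
    (S.finite_toSet.insert 0) ⟨0, Set.mem_insert _ _⟩
  have hx : x ∈ span R (S : Set M) := by
    rcases hxS with rfl | hxS
    exacts [zero_mem _, subset_span hxS]
  refine ⟨x, le_antisymm (span_le.mpr fun y hy => ?_) ((span_singleton_le_iff_mem _ _).mpr hx)⟩
  rcases h y (subset_span hy) x hx with hyx | hxy
  · exact hyx
  · rw [← span_singleton_le_iff_mem] at hxy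
    exact (span_singleton_le_iff_mem _ _).mp (hmax (Set.mem_insert_of_mem _ hy) hxy)

theorem Submodule.map_algebraMap_le (r : R) (P : Submodule R M) :
    P.map (algebraMap R (Module.End R M) r) ≤ P := by
  rintro _ ⟨m, hm, rfl⟩
  simpa using P.smul_mem r hm

theorem IsIdempotentElem.apply_eq_self_of_map_eq {f : Module.End R M} (hf : IsIdempotentElem f)
    {P : Submodule R M} (hP : P.map f = P) {m : M} (hm : m ∈ P) : f m = m := by
  rw [← hP] at hm
  obtain ⟨w, -, rfl⟩ := hm
  exact LinearMap.congr_fun hf w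

theorem LocallyUniserial.of_injective (hM : LocallyUniserial R M) (f : N →ₗ[R] M)
    (hf : Function.Injective f) : LocallyUniserial R N := by
  intro x y
  obtain ⟨e, t, s, h₁, h₂⟩ := hM (f x) (f y)
  exact ⟨e, t, s, hf (by simpa using h₁), hf (by simpa using h₂)⟩

theorem LocallyUniserial.of_surjective (hM : LocallyUniserial R M) (f : M →ₗ[R] N)
    (hf : Function.Surjective f) : LocallyUniserial R N := by
  intro x y
  obtain ⟨x, rfl⟩ := hf x
  obtain ⟨y, rfl⟩ := hf y
  obtain ⟨e, t, s, h₁, h₂⟩ := hM x y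
  exact ⟨e, t, s, by simp only [← map_smul, h₁], by simp only [← map_smul, h₂]⟩

theorem LocallyUniserial.exists_isIdempotentElem [Finite M] (hM : LocallyUniserial R M)
    (x y : M) :
    ∃ r : R, IsIdempotentElem (algebraMap R (Module.End R M) r) ∧
      (r • y = y → y ∈ R ∙ x) ∧ (r • x = 0 → x ∈ R ∙ y) := by
  obtain ⟨e, t, s, h₁, h₂⟩ := hM x y
  have : Finite (Module.End R M) := Finite.of_injective _ DFunLike.coe_injective
  obtain ⟨k, hk, hidem⟩ := exists_isIdempotentElem_pow (algebraMap R (Module.End R M) e)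
  rw [← map_pow] at hidem
  refine ⟨e ^ k, hidem, fun hy => ?_, fun hx => ?_⟩
  · obtain ⟨k, rfl⟩ := Nat.exists_eq_succ_of_ne_zero hk
    rw [← hy, pow_succ, mul_smul, h₁, smul_smul]
    exact Submodule.smul_mem _ _ (Submodule.mem_span_singleton_self x)
  · have : x = ((∑ i ∈ Finset.range k, e ^ i) * s) • y := by
      rw [mul_smul, ← h₂, smul_smul, mul_comm, mul_neg_geom_sum, sub_smul, one_smul, hx, sub_zero]
    exact this ▸ Submodule.smul_mem _ _ (Submodule.mem_span_singleton_self y)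

theorem exists_mem_forall_notMem_of_isIdempotentElem {r : R}
    (hr : IsIdempotentElem (algebraMap R (Module.End R M) r)) {P : Submodule R M}
    {s : Finset (Submodule R M)} (hs : ∀ N ∈ s, ¬ P ≤ N)
    (h₁ : ∃ z ∈ P.map (algebraMap R (Module.End R M) r),
      ∀ N ∈ s, ¬ P.map (algebraMap R (Module.End R M) r) ≤ N → z ∉ N)
    (h₂ : ∃ z ∈ P.map (algebraMap R (Module.End R M) (1 - r)),
      ∀ N ∈ s, ¬ P.map (algebraMap R (Module.End R M) (1 - r)) ≤ N → z ∉ N) :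
    ∃ z ∈ P, ∀ N ∈ s, z ∉ N := by
  obtain ⟨z₁, hz₁P, hz₁⟩ := h₁
  obtain ⟨z₂, hz₂P, hz₂⟩ := h₂
  refine ⟨z₁ + z₂, add_mem (P.map_algebraMap_le r hz₁P) (P.map_algebraMap_le _ hz₂P),
    fun N hN hzN => hs N hN ?_⟩
  have hproj : r • (z₁ + z₂) = z₁ := by
    obtain ⟨w₁, -, rfl⟩ := hz₁P
    obtain ⟨w₂, -, rfl⟩ := hz₂P
    have hr' := LinearMap.congr_fun hr
    simp only [Module.End.mul_apply, Module.algebraMap_end_apply] at hr'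
    simp only [Module.algebraMap_end_apply, smul_add, hr', sub_smul, one_smul, smul_sub,
      sub_self, add_zero]
  have hz₁N : z₁ ∈ N := hproj ▸ N.smul_mem r hzN
  have hz₂N : z₂ ∈ N := by simpa using N.sub_mem hzN hz₁N
  have hle₁ := not_not.mp fun h => hz₁ N hN h hz₁N
  have hle₂ := not_not.mp fun h => hz₂ N hN h hz₂N
  intro m hm
  simpa [sub_smul] using add_mem (hle₁ (Submodule.mem_map_of_mem hm))
    (hle₂ (Submodule.mem_map_of_mem hm))

theorem LocallyUniserial.exists_mem_forall_notMem [Finite M] (hM : LocallyUniserial R M)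
    (P : Submodule R M) (s : Finset (Submodule R M)) (hs : ∀ N ∈ s, ¬ P ≤ N) :
    ∃ z ∈ P, ∀ N ∈ s, z ∉ N := by
  classical
  induction P using WellFoundedLT.induction generalizing s with | _ P ih =>
  by_cases hchain : ∀ x ∈ P, ∀ y ∈ P, x ∈ R ∙ y ∨ y ∈ R ∙ x
  · obtain ⟨x, rfl⟩ := (Submodule.FG.of_finite.isPrincipal_of_forall_mem_span_singleton
      hchain).principal
    exact ⟨x, Submodule.mem_span_singleton_self x,
      fun N hN hx => hs N hN ((Submodule.span_singleton_le_iff_mem _ _).mpr hx)⟩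
  push Not at hchain
  obtain ⟨x, hx, y, hy, hxy, hyx⟩ := hchain
  obtain ⟨r, hr, hry, hrx⟩ := hM.exists_isIdempotentElem x y
  have avoid (g : R) (hlt : P.map (algebraMap R (Module.End R M) g) < P) :
      ∃ z ∈ P.map (algebraMap R (Module.End R M) g),
        ∀ N ∈ s, ¬ P.map (algebraMap R (Module.End R M) g) ≤ N → z ∉ N := by
    obtain ⟨z, hz, hzs⟩ := ih _ hlt (s.filter fun N => ¬ P.map (algebraMap R _ g) ≤ N)
      fun N hN => (Finset.mem_filter.mp hN).2
    exact ⟨z, hz, fun N hN hPN => hzs N (Finset.mem_filter.mpr ⟨hN, hPN⟩)⟩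
  refine exists_mem_forall_notMem_of_isIdempotentElem hr hs (avoid r ?_) (avoid (1 - r) ?_)
  · refine (P.map_algebraMap_le r).lt_of_ne fun h => hyx (hry ?_)
    simpa using hr.apply_eq_self_of_map_eq h hy
  · have hr' : IsIdempotentElem (algebraMap R (Module.End R M) (1 - r)) := by
      rw [map_sub, map_one]
      exact hr.one_sub
    refine (P.map_algebraMap_le _).lt_of_ne fun h => hxy (hrx ?_)
    simpa [sub_smul] using hr'.apply_eq_self_of_map_eq h hx

theorem LocallyUniserial.biUnion_ne_univ (hM : LocallyUniserial R M)
    {s : Finset (Submodule R M)} (hs : ⊤ ∉ s) : ⋃ N ∈ s, (N : Set M) ≠ Set.univ := by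
  classical
  intro hcover
  replace hcover : ⋃ N ∈ s, (0 : M) +ᵥ (N.toAddSubgroup : Set M) = Set.univ := by
    simpa using hcover
  let s' := s.filter fun N => N.toAddSubgroup.FiniteIndex
  replace hcover := AddSubgroup.leftCoset_cover_filter_FiniteIndex hcover
  let D := ⨅ N ∈ s', N
  have : (⨅ N ∈ s', N.toAddSubgroup).FiniteIndex :=
    AddSubgroup.finiteIndex_iInf' _ fun N hN => (Finset.mem_filter.mp hN).2
  have : D.toAddSubgroup.FiniteIndex :=
    AddSubgroup.finiteIndex_of_le (H := ⨅ N ∈ s', N.toAddSubgroup) fun m hm => by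
      simpa [D, AddSubgroup.mem_iInf, Submodule.mem_iInf] using hm
  have : Finite (M ⧸ D) := AddSubgroup.finite_quotient_of_finiteIndex
  have hD (N) (hN : N ∈ s') : D ≤ N := iInf₂_le N hN
  obtain ⟨z, -, hz⟩ := (hM.of_surjective D.mkQ D.mkQ_surjective).exists_mem_forall_notMem ⊤
    (s'.image (Submodule.map D.mkQ)) (by
      simp only [Finset.mem_image, top_le_iff]
      rintro _ ⟨N, hN, rfl⟩
      rw [Submodule.map_mkQ_eq_top, sup_eq_right.mpr (hD N hN)]
      exact fun h => hs (h ▸ Finset.mem_of_mem_filter N hN))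
  obtain ⟨z, rfl⟩ := D.mkQ_surjective z
  obtain ⟨N, hN, hzN⟩ : ∃ N ∈ s', z ∈ N := by
    have hz : z ∈ ⋃ N ∈ s', (0 : M) +ᵥ (N.toAddSubgroup : Set M) :=
      hcover ▸ Set.mem_univ z
    simpa using hz
  exact hz _ (Finset.mem_image_of_mem _ hN) (Submodule.mem_map_of_mem hzN)

end Module

/-- The u-rings of Quartararo and Butts. -/
def IsURing (R : Type*) [CommRing R] : Prop :=
  ∀ (s : Finset (Ideal R)) (C : Ideal R), (C : Set R) ⊆ ⋃ A ∈ s, (A : Set R) → ∃ A ∈ s, C ≤ A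

theorem LocallyUniserial.isURing {R : Type*} [CommRing R] (hR : LocallyUniserial R R) :
    IsURing R := by
  classical
  intro s C hC
  by_contra! hle
  refine (hR.of_injective C.subtype C.injective_subtype).biUnion_ne_univ
    (s := s.image (Submodule.comap C.subtype)) ?_ ?_
  · simpa [Submodule.comap_subtype_eq_top] using hle
  · refine Set.eq_univ_of_forall fun z => ?_
    obtain ⟨A, hA, hz⟩ := Set.mem_iUnion₂.mp (hC z.2)
    simpa using ⟨A, hA, hz⟩

section Absorbing

variable {R : Type*} [CommRing R] {ι : Type*} [Fintype ι] [DecidableEq ι] {I : Ideal R}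

theorem IsURing.exists_prod_erase_le_of_update_span_singleton (hR : IsURing R)
    (J : ι → Ideal R) (p : ι)
    (h : ∀ z ∈ J p,
      ∃ j, ∏ i ∈ Finset.univ.erase j, Function.update J p (Ideal.span {z}) i ≤ I) :
    ∃ j, ∏ i ∈ Finset.univ.erase j, J i ≤ I := by
  by_cases hp : ∏ i ∈ Finset.univ.erase p, J i ≤ I
  · exact ⟨p, hp⟩
  let colon (j : ι) : Ideal R := I.colon (∏ i ∈ (Finset.univ.erase j).erase p, J i : Ideal R)
  have prod_eq (j : ι) (hj : j ≠ p) (K : Ideal R) :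
      ∏ i ∈ Finset.univ.erase j, Function.update J p K i =
        K * ∏ i ∈ (Finset.univ.erase j).erase p, J i := by
    rw [← Finset.mul_prod_erase _ _ (Finset.mem_erase.mpr ⟨hj.symm, Finset.mem_univ p⟩),
      Function.update_self]
    congr 1
    exact Finset.prod_congr rfl fun i hi =>
      Function.update_of_ne (Finset.ne_of_mem_erase hi) _ _
  have hcover : (J p : Set R) ⊆ ⋃ A ∈ (Finset.univ.erase p).image colon, (A : Set R) := by
    intro z hz
    obtain ⟨j, hj⟩ := h z hz
    have hjp : j ≠ p := by
      rintro rfl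
      refine hp (le_of_eq_of_le (Finset.prod_congr rfl fun i hi => ?_) hj)
      exact (Function.update_of_ne (Finset.ne_of_mem_erase hi) _ _).symm
    rw [prod_eq j hjp] at hj
    refine Set.mem_biUnion (Finset.mem_image_of_mem colon
      (Finset.mem_erase.mpr ⟨hjp, Finset.mem_univ j⟩)) ?_
    exact Submodule.mem_colon.mpr fun b hb =>
      hj (Ideal.mul_mem_mul (Ideal.mem_span_singleton_self z) hb)
  obtain ⟨_, hA, hle⟩ := hR _ _ hcover
  obtain ⟨j, hj, rfl⟩ := Finset.mem_image.mp hA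
  refine ⟨j, ?_⟩
  have := prod_eq j (Finset.ne_of_mem_erase hj) (J p)
  rw [Function.update_eq_self] at this
  rw [this]
  exact Ideal.mul_le.mpr fun a ha b hb => Submodule.mem_colon.mp (hle ha) b hb

theorem IsNAbsorbing.exists_prod_erase_span_singleton_le {n : ℕ} (hI : IsNAbsorbing I n)
    (x : Fin (n + 1) → R) (h : ∏ i, Ideal.span {x i} ≤ I) :
    ∃ j, ∏ i ∈ Finset.univ.erase j, Ideal.span {x i} ≤ I := by
  simp only [Ideal.prod_span_singleton, Ideal.span_singleton_le_iff_mem] at h ⊢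
  exact hI.2 x h

theorem IsNAbsorbing.exists_prod_erase_le {n : ℕ} (hR : IsURing R) (hI : IsNAbsorbing I n)
    (J : Fin (n + 1) → Ideal R) (hJ : ∏ i, J i ≤ I) :
    ∃ j, ∏ i ∈ Finset.univ.erase j, J i ≤ I := by
  classical
  suffices ∀ S : Finset (Fin (n + 1)), ∀ J : Fin (n + 1) → Ideal R,
      (∀ i ∉ S, ∃ x, J i = Ideal.span {x}) → ∏ i, J i ≤ I →
        ∃ j, ∏ i ∈ Finset.univ.erase j, J i ≤ I from this Finset.univ J (by simp) hJ
  intro S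
  induction S using Finset.induction_on with
  | empty =>
    intro J hprincipal hJ
    choose x hx using fun i => hprincipal i (Finset.notMem_empty i)
    obtain rfl : J = fun i => Ideal.span {x i} := funext hx
    exact hI.exists_prod_erase_span_singleton_le x hJ
  | insert p S hpS ih =>
    intro J hprincipal hJ
    refine hR.exists_prod_erase_le_of_update_span_singleton J p fun z hz =>
      ih _ (fun i hi => ?_) ?_
    · rcases eq_or_ne i p with rfl | hip
      · exact ⟨z, Function.update_self ..⟩
      · rw [Function.update_of_ne hip]
        exact hprincipal i (by simp [hip, hi])
    · rw [Finset.prod_update_of_mem (Finset.mem_univ p), ← Finset.erase_eq]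
      rw [← Finset.mul_prod_erase _ _ (Finset.mem_univ p)] at hJ
      exact le_trans (Ideal.mul_mono_left ((Ideal.span_singleton_le_iff_mem _).mpr hz)) hJ

end Absorbing

open FractionalIdeal in
theorem IsPruferDomain.locallyUniserial {R : Type*} [CommRing R] [IsDomain R]
    (hR : IsPruferDomain R) : LocallyUniserial R R := by
  intro a b
  rcases eq_or_ne a 0 with rfl | ha
  · exact ⟨0, 0, 0, by simp, by simp⟩
  let K := FractionRing R
  have hab : Ideal.span {a, b} ≠ ⊥ := fun h =>
    ha <| (Submodule.mem_bot R).mp (h ▸ Ideal.subset_span (Set.mem_insert a {b}))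
  obtain ⟨J, hJ⟩ := hR _ (Submodule.fg_span (Set.toFinite _)) hab
  have integral : ∀ c ∈ Ideal.span {a, b}, ∀ w ∈ J,
      ∃ r : R, algebraMap R K r = algebraMap R K c * w :=
    fun c hc w hw => (mem_one_iff _).mp (hJ ▸ mul_mem_mul (mem_coeIdeal_of_mem _ hc) hw)
  have hone : (1 : K) ∈ (Ideal.span {a, b} : FractionalIdeal (nonZeroDivisors R) K) * J :=
    hJ ▸ one_mem_one _
  rw [Ideal.span_insert, coeIdeal_sup, add_mul, mem_add] at hone
  obtain ⟨_, hu, _, hv, huv⟩ := hone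
  rw [coeIdeal_span_singleton, mem_singleton_mul] at hu hv
  obtain ⟨u, hu, rfl⟩ := hu
  obtain ⟨v, hv, rfl⟩ := hv
  -- `a u + b v = 1`; take `e = a u`, so that `e b = (b u) a` and `(1 - e) a = (a v) b`.
  obtain ⟨e, he⟩ := integral a (Ideal.subset_span (by simp)) u hu
  obtain ⟨t, ht⟩ := integral b (Ideal.subset_span (by simp)) u hu
  obtain ⟨s, hs⟩ := integral a (Ideal.subset_span (by simp)) v hv
  refine ⟨e, t, s, IsFractionRing.injective R K ?_, IsFractionRing.injective R K ?_⟩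
  · simp only [smul_eq_mul, map_mul, he, ht]; ring
  · simp only [smul_eq_mul, map_mul, map_sub, map_one, he, hs]
    linear_combination (-algebraMap R K a) * huv

theorem isStronglyNAbsorbing_of_prufer_general {R : Type*} [CommRing R] [IsDomain R]
    (hR : IsPruferDomain R) (I : Ideal R) (n : ℕ)
    (hI : IsNAbsorbing I n) : IsStronglyNAbsorbing I n :=
  ⟨hI.1, fun J hJ => hI.exists_prod_erase_le hR.locallyUniserial.isURing J hJ⟩

/-- In a Prüfer domain, every `n`-absorbing ideal is strongly `n`-absorbing. -/
theorem isStronglyNAbsorbing_of_prufer {R : Type*} [CommRing R] [IsDomain R]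
    (hR : IsPruferDomain R) (I : Ideal R) (n : ℕ) (hn : 0 < n)
    (hI : IsNAbsorbing I n) : IsStronglyNAbsorbing I n :=
  isStronglyNAbsorbing_of_prufer_general hR I n hI
end

section
/- Let R be a commutative ring in which every n-absorbing ideal is strongly n-absorbing (for all positive integers n), and let I be a radical ideal of R. If I is an n-absorbing ideal of R, then I[X] is an n-absorbing ideal of R[X]. -/
/-!
A radical ideal `I` is the intersection of the primes `P ⊇ I`, and each `P[X]` is prime. So if
`f₀ ⋯ fₙ ∈ I[X]`, then for every such `P` some `fᵢ` lies in `P[X]`, i.e. `c(fᵢ) ⊆ P`; hence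
`c(f₀) ⋯ c(fₙ) ⊆ I`. Since `I` is strongly `n`-absorbing, the product of the contents of some `n`
of the `fᵢ` lies in `I`, and the product of those `fᵢ` lies in the extension of that product of
contents to `R[X]`, hence in `I[X]`.
-/

open Polynomial

section PolyContent

variable {R : Type*} [CommRing R]

lemma polyContent_le_iff_mem_map_C {f : R[X]} {I : Ideal R} :
    polyContent f ≤ I ↔ f ∈ I.map (C : R →+* R[X]) := by
  rw [polyContent, Ideal.span_le, Set.range_subset_iff, Ideal.mem_map_C_iff]
  rfl

lemma mem_map_C_polyContent (f : R[X]) : f ∈ (polyContent f).map (C : R →+* R[X]) :=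
  polyContent_le_iff_mem_map_C.mp le_rfl

lemma map_C_ne_top {I : Ideal R} (hI : I ≠ ⊤) : I.map (C : R →+* R[X]) ≠ ⊤ := by
  intro htop
  apply hI
  rw [Ideal.eq_top_iff_one, ← coeff_one_zero (R := R)]
  exact Ideal.mem_map_C_iff.mp (htop ▸ Submodule.mem_top) 0

variable {ι : Type*} {s : Finset ι} {f : ι → R[X]}

lemma prod_mem_map_C_of_prod_polyContent_le {I : Ideal R}
    (h : ∏ i ∈ s, polyContent (f i) ≤ I) : ∏ i ∈ s, f i ∈ I.map (C : R →+* R[X]) := by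
  have hmem : ∏ i ∈ s, f i ∈ ∏ i ∈ s, (polyContent (f i)).map (C : R →+* R[X]) :=
    Ideal.prod_mem_prod fun i _ => mem_map_C_polyContent (f i)
  have hmap : (∏ i ∈ s, polyContent (f i)).map (C : R →+* R[X]) =
      ∏ i ∈ s, (polyContent (f i)).map (C : R →+* R[X]) :=
    map_prod (Ideal.mapHom C) _ s
  exact Ideal.map_mono h (hmap ▸ hmem)

lemma exists_polyContent_le_of_prod_mem_map_C {P : Ideal R} [P.IsPrime]
    (h : ∏ i ∈ s, f i ∈ P.map (C : R →+* R[X])) : ∃ i ∈ s, polyContent (f i) ≤ P := by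
  simpa only [polyContent_le_iff_mem_map_C] using Ideal.IsPrime.prod_mem_iff.mp h

lemma prod_polyContent_le_of_prod_mem_map_C {I : Ideal R} (hI : I.IsRadical)
    (h : ∏ i ∈ s, f i ∈ I.map (C : R →+* R[X])) : ∏ i ∈ s, polyContent (f i) ≤ I := by
  rw [← hI.radical, Ideal.radical_eq_sInf]
  refine le_sInf fun P ⟨hIP, hP⟩ => hP.prod_le.mpr ?_
  exact exists_polyContent_le_of_prod_mem_map_C (Ideal.map_mono hIP h)

end PolyContent

/-- If in `R` every `n`-absorbing ideal is strongly `n`-absorbing and `I` is a radical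
`n`-absorbing ideal, then `I[X]` is `n`-absorbing. -/
theorem isNAbsorbing_map_C_of_radical {R : Type*} [CommRing R]
    (h : ∀ (n : ℕ), 0 < n → ∀ J : Ideal R, IsNAbsorbing J n → IsStronglyNAbsorbing J n)
    (I : Ideal R) (hrad : I.radical = I) (n : ℕ) (hn : 0 < n)
    (hI : IsNAbsorbing I n) : IsNAbsorbing (I.map (C : R →+* R[X])) n := by
  refine ⟨map_C_ne_top hI.1, fun x hx => ?_⟩
  have hcontent : ∏ i, polyContent (x i) ≤ I :=
    prod_polyContent_le_of_prod_mem_map_C hrad.le hx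
  obtain ⟨j, hj⟩ := (h n hn I hI).2 (fun i => polyContent (x i)) hcontent
  exact ⟨j, prod_mem_map_C_of_prod_polyContent_le hj⟩
end

section
/- Let R be a Dedekind domain. Then for all formal power series f, g ∈ R[[X]], the content ideal satisfies c(fg) = c(f)·c(g), where c(h) is the ideal of R generated by the coefficients of h. -/
open Polynomial

/-- The content of a formal power series: the ideal generated by its coefficients. -/
def psContent {R : Type*} [CommRing R] (f : PowerSeries R) : Ideal R :=
  Ideal.span (Set.range fun n : ℕ => PowerSeries.coeff n f)

/-
Equality of ideals can be tested after localizing at each maximal ideal, and localizations of a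
Dedekind domain are principal ideal domains. Over a PID write `f = a f'` and `g = b g'` with
`c(f) = (a)`, `c(g) = (b)` and `c(f') = c(g') = (1)`. Then `c(f'g') = (1)`: otherwise it lies in
a maximal ideal `M`, and since `(R/M)⟦X⟧` is a domain one of `f'`, `g'` vanishes modulo `M`.
Hence `c(fg) = (a)(b) c(f'g') = c(f) c(g)`.
-/

section PowerSeriesContent

variable {R : Type*} [CommRing R]

theorem coeff_mem_psContent (f : PowerSeries R) (n : ℕ) : PowerSeries.coeff n f ∈ psContent f :=
  Ideal.subset_span ⟨n, rfl⟩

theorem psContent_le_iff {f : PowerSeries R} {I : Ideal R} :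
    psContent f ≤ I ↔ ∀ n, PowerSeries.coeff n f ∈ I := by
  rw [psContent, Ideal.span_le, Set.range_subset_iff]
  rfl

theorem psContent_eq_bot_iff {f : PowerSeries R} : psContent f = ⊥ ↔ f = 0 := by
  rw [← le_bot_iff, psContent_le_iff, PowerSeries.ext_iff]
  simp

theorem psContent_one : psContent (1 : PowerSeries R) = ⊤ :=
  (Ideal.eq_top_iff_one _).2 (by simpa using coeff_mem_psContent (1 : PowerSeries R) 0)

theorem psContent_map {S : Type*} [CommRing S] (φ : R →+* S) (f : PowerSeries R) :
    psContent (PowerSeries.map φ f) = (psContent f).map φ := by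
  rw [psContent, psContent, Ideal.map_span, ← Set.range_comp]
  rfl

theorem psContent_C_mul (a : R) (f : PowerSeries R) :
    psContent (PowerSeries.C a * f) = Ideal.span {a} * psContent f := by
  rw [psContent, psContent, Ideal.span_mul_span', Set.singleton_mul, ← Set.range_comp]
  simp only [PowerSeries.coeff_C_mul]
  rfl

theorem psContent_le_iff_map_eq_zero {f : PowerSeries R} {I : Ideal R} :
    psContent f ≤ I ↔ PowerSeries.map (Ideal.Quotient.mk I) f = 0 := by
  simp [psContent_le_iff, PowerSeries.ext_iff, Ideal.Quotient.eq_zero_iff_mem]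

theorem psContent_le_or_le_of_mul_le {f g : PowerSeries R} {P : Ideal R} [P.IsPrime]
    (h : psContent (f * g) ≤ P) : psContent f ≤ P ∨ psContent g ≤ P := by
  simpa only [psContent_le_iff_map_eq_zero, map_mul, mul_eq_zero] using h

theorem psContent_mul_eq_top {f g : PowerSeries R} (hf : psContent f = ⊤)
    (hg : psContent g = ⊤) : psContent (f * g) = ⊤ := by
  by_contra h
  obtain ⟨M, hM, hle⟩ := Ideal.exists_le_maximal _ h
  rcases psContent_le_or_le_of_mul_le hle with hfM | hgM
  · exact hM.ne_top (top_unique (hf ▸ hfM))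
  · exact hM.ne_top (top_unique (hg ▸ hgM))

theorem exists_eq_C_mul_of_psContent_eq_span [IsDomain R] {f : PowerSeries R} {a : R}
    (h : psContent f = Ideal.span {a}) :
    ∃ f' : PowerSeries R, f = PowerSeries.C a * f' ∧ psContent f' = ⊤ := by
  by_cases ha : a = 0
  · refine ⟨1, ?_, psContent_one⟩
    rw [ha, map_zero, zero_mul, ← psContent_eq_bot_iff, h, ha, Ideal.span_singleton_eq_bot]
  have hdvd (n : ℕ) : a ∣ PowerSeries.coeff n f :=
    Ideal.mem_span_singleton.1 (h ▸ coeff_mem_psContent f n)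
  set f' : PowerSeries R := PowerSeries.mk fun n => (hdvd n).choose
  have hf : f = PowerSeries.C a * f' := by
    ext n
    simpa [f', PowerSeries.coeff_C_mul] using (hdvd n).choose_spec
  refine ⟨f', hf, ?_⟩
  rw [← Ideal.span_singleton_mul_right_inj ha, ← psContent_C_mul, ← hf, h, Ideal.mul_top]

theorem psContent_mul_of_isPrincipalIdealRing [IsDomain R] [IsPrincipalIdealRing R]
    (f g : PowerSeries R) : psContent (f * g) = psContent f * psContent g := by
  obtain ⟨a, ha⟩ : ∃ a, psContent f = Ideal.span {a} :=
    ⟨_, (Ideal.span_singleton_generator _).symm⟩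
  obtain ⟨b, hb⟩ : ∃ b, psContent g = Ideal.span {b} :=
    ⟨_, (Ideal.span_singleton_generator _).symm⟩
  obtain ⟨f', rfl, hf'⟩ := exists_eq_C_mul_of_psContent_eq_span ha
  obtain ⟨g', rfl, hg'⟩ := exists_eq_C_mul_of_psContent_eq_span hb
  have hfg : PowerSeries.C a * f' * (PowerSeries.C b * g') =
      PowerSeries.C a * (PowerSeries.C b * (f' * g')) := by ring
  rw [hfg, psContent_C_mul, psContent_C_mul, psContent_mul_eq_top hf' hg', Ideal.mul_top, ha, hb]

end PowerSeriesContent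

theorem psContent_mul_general {R : Type*} [CommRing R] [IsDedekindDomain R]
    (f g : PowerSeries R) : psContent (f * g) = psContent f * psContent g := by
  refine Ideal.eq_of_localization_maximal fun P _ => ?_
  rw [Ideal.map_mul, ← psContent_map, ← psContent_map, ← psContent_map, map_mul]
  exact psContent_mul_of_isPrincipalIdealRing _ _

/-- Over a Dedekind domain, the content of power series is multiplicative. -/
theorem psContent_mul {R : Type*} [CommRing R] [IsDomain R] [IsDedekindDomain R]
    (f g : PowerSeries R) : psContent (f * g) = psContent f * psContent g :=
  psContent_mul_general f g
end
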